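/- Let M ∈ ℕ, E = EuclideanSpace ℝ (Fin M), (Ω, ℱ, μ) a probability space, g : Ω → E Bochner integrable, W : E → ℝ continuously differentiable, and c(u, v) = W(v) − W(u) + ⟨∇W(u), u − v⟩. Let Ξ ⊆ E be a closed set and a : Ω → E strongly measurable with: (i) a(ω) ∈ Ξ for all ω; (ii) a is a version of the conditional expectation μ[g | σ(a)], where σ(a) is the σ-algebra generated by a; (iii) c(a(ω), g(ω)) ≤ c(b', g(ω)) for all ω ∈ Ω and all b' ∈ Ξ; (iv) for every y in the closure of the convex hull of the range of g, and every δ > 0, there exists b' ∈ Ξ with c(b', y) ≤ δ. Let b : Ω → E be strongly measurable with b a version of μ[g | σ(b)] and b(ω) in the closure of the convex hull of the range of g for μ-a.e. ω. Assume W∘g, W∘a, W∘b, ω ↦ ⟨∇W(a(ω)), g(ω)⟩, ω ↦ ⟨∇W(b(ω)), g(ω)⟩, ω ↦ ⟨∇W(a(ω)), a(ω)⟩ and ω ↦ ⟨∇W(b(ω)), b(ω)⟩ are μ-integrable. Then ∫ c(a(ω), g(ω)) dμ(ω) ≤ ∫ c(b(ω), g(ω)) dμ(ω). -/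

import Mathlib

open MeasureTheory
open scoped RealInnerProductSpace

/-! For a feasible `b` the martingale property removes the gradient term,
`E⟪∇W(b), g⟫ = E⟪∇W(b), b⟫`, so `E c(b, g) = E W(g) - E W(b)`. For `d ∈ Ξ`, conditioning
`c(a, g) ≤ c(d, g)` on `σ(b)` gives `E[c(a, g) | σ(b)] ≤ E[W(g) | σ(b)] - W(b) + c(d, b)`, since
`c(d, ·) - W` is affine. Letting `d` range over a countable dense subset of `Ξ`, continuity of
`c(·, b)` and maximality make the last term arbitrarily small almost surely, hence
`E c(a, g) ≤ E W(g) - E W(b)`. -/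

lemma TopologicalSpace.IsSeparable.ae_forall_le {α X : Type*} [TopologicalSpace X]
    [PseudoMetrizableSpace X] {mα : MeasurableSpace α} {μ : Measure α} {s : Set X}
    (hs : IsSeparable s) {L : α → ℝ} {f : α → X → ℝ} (hf : ∀ a, Continuous (f a))
    (h : ∀ x ∈ s, ∀ᵐ a ∂μ, L a ≤ f a x) : ∀ᵐ a ∂μ, ∀ x ∈ s, L a ≤ f a x := by
  obtain ⟨t, hts, htc, hst⟩ := hs.exists_countable_dense_subset
  filter_upwards [(ae_ball_iff htc).2 fun x hx ↦ h x (hts hx)] with a ha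
  exact fun x hx ↦ (isClosed_le continuous_const (hf a)).closure_subset_iff.2 ha (hst hx)

section Bregman

variable {E : Type*} [NormedAddCommGroup E] [InnerProductSpace ℝ E] [CompleteSpace E]

noncomputable def bregmanDiv (W : E → ℝ) (u v : E) : ℝ :=
  W v - W u + ⟪gradient W u, u - v⟫

lemma bregmanDiv_eq (W : E → ℝ) (u v : E) :
    bregmanDiv W u v = W v + (⟪gradient W u, u⟫ - W u) - ⟪gradient W u, v⟫ := by
  rw [bregmanDiv, inner_sub_right]; ring

lemma ContDiff.continuous_gradient {W : E → ℝ} (hW : ContDiff ℝ 1 W) :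
    Continuous (gradient W) :=
  (InnerProductSpace.toDual ℝ E).symm.continuous.comp (hW.continuous_fderiv one_ne_zero)

lemma continuous_bregmanDiv_left {W : E → ℝ} (hW : ContDiff ℝ 1 W) (v : E) :
    Continuous fun u ↦ bregmanDiv W u v :=
  (continuous_const.sub hW.continuous).add
    (hW.continuous_gradient.inner (continuous_id.sub continuous_const))

variable {Ω : Type*} {m mΩ : MeasurableSpace Ω} {μ : Measure Ω}

lemma integrable_bregmanDiv {W : E → ℝ} {u v : Ω → E}
    (hWv : Integrable (fun ω ↦ W (v ω)) μ) (hWu : Integrable (fun ω ↦ W (u ω)) μ)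
    (huu : Integrable (fun ω ↦ ⟪gradient W (u ω), u ω⟫) μ)
    (huv : Integrable (fun ω ↦ ⟪gradient W (u ω), v ω⟫) μ) :
    Integrable (fun ω ↦ bregmanDiv W (u ω) (v ω)) μ := by
  simp_rw [bregmanDiv_eq]
  exact (hWv.add (huu.sub hWu)).sub huv

lemma integral_inner_condExp (hm : m ≤ mΩ) [SigmaFinite (μ.trim hm)] {F g : Ω → E}
    (hF : StronglyMeasurable[m] F) (hg : Integrable g μ)
    (hFg : Integrable (fun ω ↦ ⟪F ω, g ω⟫) μ) :
    ∫ ω, ⟪F ω, g ω⟫ ∂μ = ∫ ω, ⟪F ω, (μ[g | m]) ω⟫ ∂μ := by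
  rw [← integral_condExp hm]
  exact integral_congr_ae (condExp_bilin_of_stronglyMeasurable_left (innerSL ℝ) hF hFg hg)

lemma integral_bregmanDiv_of_ae_eq_condExp (hm : m ≤ mΩ) [IsFiniteMeasure μ] {W : E → ℝ}
    (hW : Continuous (gradient W)) {g b : Ω → E} (hg : Integrable g μ)
    (hbm : StronglyMeasurable[m] b) (hb : b =ᵐ[μ] μ[g | m])
    (hWg : Integrable (fun ω ↦ W (g ω)) μ) (hWb : Integrable (fun ω ↦ W (b ω)) μ)
    (hbg : Integrable (fun ω ↦ ⟪gradient W (b ω), g ω⟫) μ)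
    (hbb : Integrable (fun ω ↦ ⟪gradient W (b ω), b ω⟫) μ) :
    ∫ ω, bregmanDiv W (b ω) (g ω) ∂μ = ∫ ω, W (g ω) ∂μ - ∫ ω, W (b ω) ∂μ := by
  have hmart : ∫ ω, ⟪gradient W (b ω), g ω⟫ ∂μ = ∫ ω, ⟪gradient W (b ω), b ω⟫ ∂μ := by
    rw [integral_inner_condExp hm (hW.comp_stronglyMeasurable hbm) hg hbg]
    exact integral_congr_ae (hb.mono fun ω hω ↦ by dsimp only; rw [← hω])
  simp_rw [bregmanDiv_eq]
  rw [integral_sub ?_ hbg, integral_add hWg ?_, integral_sub hbb hWb, hmart]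
  · ring
  · exact hbb.sub hWb
  · exact hWg.add (hbb.sub hWb)

lemma condExp_bregmanDiv_left_ae_eq (hm : m ≤ mΩ) [IsFiniteMeasure μ] (W : E → ℝ) (d : E)
    {g b : Ω → E} (hg : Integrable g μ) (hWg : Integrable (fun ω ↦ W (g ω)) μ)
    (hb : b =ᵐ[μ] μ[g | m]) :
    μ[fun ω ↦ bregmanDiv W d (g ω) | m] =ᵐ[μ]
      fun ω ↦ (μ[fun ω ↦ W (g ω) | m]) ω + (bregmanDiv W d (b ω) - W (b ω)) := by
  set T : E →L[ℝ] ℝ := -innerSL ℝ (gradient W d)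
  set k := ⟪gradient W d, d⟫ - W d
  have hsplit : (fun ω ↦ bregmanDiv W d (g ω)) = (fun ω ↦ W (g ω)) + fun ω ↦ T (g ω) + k := by
    ext ω
    simp only [bregmanDiv_eq, Pi.add_apply, T, k, neg_apply, innerSL_apply_apply]
    ring
  rw [hsplit]
  have hTg : Integrable (fun ω ↦ T (g ω) + k) μ := (T.integrable_comp hg).add (integrable_const k)
  filter_upwards [condExp_add hWg hTg m, T.comp_condExp_add_const_comm hm hg k, hb]
    with ω hadd haff hbω
  rw [hadd, Pi.add_apply, ← haff, ← hbω]
  simp only [bregmanDiv_eq, T, k, neg_apply, innerSL_apply_apply]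
  ring

lemma integral_bregmanDiv_le_of_forall_mem_le (hm : m ≤ mΩ) [IsFiniteMeasure μ] {W : E → ℝ}
    (hW : ContDiff ℝ 1 W) {Ξ : Set E} (hΞ : TopologicalSpace.IsSeparable Ξ) {g a b : Ω → E}
    (hg : Integrable g μ) (hb : b =ᵐ[μ] μ[g | m])
    (hamin : ∀ ω, ∀ d ∈ Ξ, bregmanDiv W (a ω) (g ω) ≤ bregmanDiv W d (g ω))
    (hmax : ∀ᵐ ω ∂μ, ∀ δ : ℝ, 0 < δ → ∃ d ∈ Ξ, bregmanDiv W d (b ω) ≤ δ)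
    (ha : Integrable (fun ω ↦ bregmanDiv W (a ω) (g ω)) μ)
    (hWg : Integrable (fun ω ↦ W (g ω)) μ) (hWb : Integrable (fun ω ↦ W (b ω)) μ) :
    ∫ ω, bregmanDiv W (a ω) (g ω) ∂μ ≤ ∫ ω, W (g ω) ∂μ - ∫ ω, W (b ω) ∂μ := by
  set A := μ[fun ω ↦ bregmanDiv W (a ω) (g ω) | m]
  set G := μ[fun ω ↦ W (g ω) | m]
  have hcond : ∀ d ∈ Ξ, ∀ᵐ ω ∂μ, A ω - G ω + W (b ω) ≤ bregmanDiv W d (b ω) := by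
    intro d hd
    have hd_int : Integrable (fun ω ↦ bregmanDiv W d (g ω)) μ :=
      integrable_bregmanDiv hWg (integrable_const _) (integrable_const _)
        ((innerSL ℝ (gradient W d)).integrable_comp hg)
    filter_upwards [condExp_mono ha hd_int (ae_of_all _ fun ω ↦ hamin ω d hd),
      condExp_bregmanDiv_left_ae_eq hm W d hg hWg hb] with ω hmono hd_eq
    rw [hd_eq] at hmono
    linarith
  have hle : ∀ᵐ ω ∂μ, A ω ≤ G ω - W (b ω) := by
    filter_upwards [hΞ.ae_forall_le (fun ω ↦ continuous_bregmanDiv_left hW (b ω)) hcond, hmax]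
      with ω hA hδ
    refine le_of_forall_pos_le_add fun δ hδpos ↦ ?_
    obtain ⟨d, hd, hdδ⟩ := hδ δ hδpos
    linarith [hA d hd]
  calc ∫ ω, bregmanDiv W (a ω) (g ω) ∂μ = ∫ ω, A ω ∂μ := (integral_condExp hm).symm
    _ ≤ ∫ ω, G ω - W (b ω) ∂μ :=
      integral_mono_ae integrable_condExp (integrable_condExp.sub hWb) hle
    _ = ∫ ω, W (g ω) ∂μ - ∫ ω, W (b ω) ∂μ := by
      rw [integral_sub integrable_condExp hWb, integral_condExp hm]

end Bregman

/-- Sufficiency in moment persuasion: a feasible policy `a` (a martingale version of the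
conditional expectation of `g` given `σ(a)`) whose values pointwise minimize the Bregman
cost `c` over a `conv(g(Ω))`-maximal support set `Ξ` has expected cost no greater than any
other feasible policy `b`. -/
theorem moment_persuasion_sufficiency
    {M : ℕ} {Ω : Type*} [MeasurableSpace Ω]
    (μ : Measure Ω) [IsProbabilityMeasure μ]
    (g : Ω → EuclideanSpace ℝ (Fin M)) (hg : Integrable g μ)
    (W : EuclideanSpace ℝ (Fin M) → ℝ) (hW : ContDiff ℝ 1 W)
    (c : EuclideanSpace ℝ (Fin M) → EuclideanSpace ℝ (Fin M) → ℝ)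
    (hc : ∀ u v, c u v = W v - W u + ⟪gradient W u, u - v⟫)
    (Ξ : Set (EuclideanSpace ℝ (Fin M)))
    (a : Ω → EuclideanSpace ℝ (Fin M))
    (hamin : ∀ ω, ∀ b' ∈ Ξ, c (a ω) (g ω) ≤ c b' (g ω))
    (hmaximal : ∀ y ∈ closure (convexHull ℝ (Set.range g)), ∀ δ : ℝ, 0 < δ →
      ∃ b' ∈ Ξ, c b' y ≤ δ)
    (b : Ω → EuclideanSpace ℝ (Fin M)) (hbmeas : StronglyMeasurable b)
    (hbcond : b =ᵐ[μ] μ[g | MeasurableSpace.comap b (by infer_instance)])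
    (hbmem : ∀ᵐ ω ∂μ, b ω ∈ closure (convexHull ℝ (Set.range g)))
    (hint1 : Integrable (fun ω => W (g ω)) μ)
    (hint2 : Integrable (fun ω => W (a ω)) μ)
    (hint3 : Integrable (fun ω => W (b ω)) μ)
    (hint4 : Integrable (fun ω => ⟪gradient W (a ω), g ω⟫) μ)
    (hint5 : Integrable (fun ω => ⟪gradient W (b ω), g ω⟫) μ)
    (hint6 : Integrable (fun ω => ⟪gradient W (a ω), a ω⟫) μ)
    (hint7 : Integrable (fun ω => ⟪gradient W (b ω), b ω⟫) μ) :
    ∫ ω, c (a ω) (g ω) ∂μ ≤ ∫ ω, c (b ω) (g ω) ∂μ := by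
  obtain rfl : c = bregmanDiv W := funext fun u ↦ funext (hc u)
  have hm := hbmeas.measurable.comap_le
  rw [integral_bregmanDiv_of_ae_eq_condExp hm hW.continuous_gradient hg
    (comap_measurable b).stronglyMeasurable hbcond hint1 hint3 hint5 hint7]
  refine integral_bregmanDiv_le_of_forall_mem_le hm hW (.of_separableSpace Ξ) hg hbcond hamin ?_
    (integrable_bregmanDiv hint1 hint2 hint6 hint4) hint1 hint3
  filter_upwards [hbmem] with ω hω using hmaximal _ hω
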